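/- Let {z^t} be the sequence produced by ExRM+ with stepsize η = 1/(√2·L_F) and initial point z^0 ∈ Z. Then for any Nash equilibrium z* of the matrix game given by A and any T ≥ 1, there exists t with 1 ≤ t ≤ T such that, with (x^t, y^t) = g(z^t), DualGap(x^t, y^t) ≤ 24·L_F·‖z^0 − z*‖ / √T. -/

import Mathlib

open scoped BigOperators RealInnerProductSpace
open Filter Topology

noncomputable section

abbrev Vec (d : ℕ) := EuclideanSpace ℝ (Fin d)
abbrev Joint (d1 d2 : ℕ) := EuclideanSpace ℝ (Fin d1 ⊕ Fin d2)

/-- First block of a joint vector. -/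
def xPart {d1 d2 : ℕ} (z : Joint d1 d2) : Vec d1 := WithLp.toLp 2 (fun i => z (Sum.inl i))

/-- Second block of a joint vector. -/
def yPart {d1 d2 : ℕ} (z : Joint d1 d2) : Vec d2 := WithLp.toLp 2 (fun j => z (Sum.inr j))

/-- Assemble a joint vector from its two blocks. -/
def joinPt {d1 d2 : ℕ} (x : Vec d1) (y : Vec d2) : Joint d1 d2 :=
  WithLp.toLp 2 (fun s => Sum.elim (fun i => x i) (fun j => y j) s)

/-- The probability simplex Δ^d. -/
def simplexSet (d : ℕ) : Set (Vec d) := {x | (∀ i, 0 ≤ x i) ∧ ∑ i, x i = 1}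

/-- The clipped positive orthant Δ^d_≥. -/
def clippedSet (d : ℕ) : Set (Vec d) := {u | (∀ i, 0 ≤ u i) ∧ 1 ≤ ∑ i, u i}

/-- Z = Δ^{d1} × Δ^{d2}, as a subset of the joint Euclidean space. -/
def Zset (d1 d2 : ℕ) : Set (Joint d1 d2) :=
  {z | xPart z ∈ simplexSet d1 ∧ yPart z ∈ simplexSet d2}

/-- Z_≥ = Δ^{d1}_≥ × Δ^{d2}_≥. -/
def ZgeSet (d1 d2 : ℕ) : Set (Joint d1 d2) :=
  {z | xPart z ∈ clippedSet d1 ∧ yPart z ∈ clippedSet d2}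

/-- Bilinear payoff xᵀ A y. -/
def payoff {d1 d2 : ℕ} (A : Matrix (Fin d1) (Fin d2) ℝ) (x : Vec d1) (y : Vec d2) : ℝ :=
  ∑ i, ∑ j, x i * A i j * y j

/-- Duality gap of a pair of strategies. -/
def dualGap {d1 d2 : ℕ} (A : Matrix (Fin d1) (Fin d2) ℝ) (x : Vec d1) (y : Vec d2) : ℝ :=
  sSup ((fun y' => payoff A x y') '' simplexSet d2) -
    sInf ((fun x' => payoff A x' y) '' simplexSet d1)

/-- Nash equilibrium: a feasible pair with zero duality gap. -/
def IsNash {d1 d2 : ℕ} (A : Matrix (Fin d1) (Fin d2) ℝ) (x : Vec d1) (y : Vec d2) : Prop :=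
  x ∈ simplexSet d1 ∧ y ∈ simplexSet d2 ∧ dualGap A x y = 0

/-- Strict Nash equilibrium: unique best responses on both sides. -/
def IsStrictNash {d1 d2 : ℕ} (A : Matrix (Fin d1) (Fin d2) ℝ)
    (xs : Vec d1) (ys : Vec d2) : Prop :=
  IsNash A xs ys ∧
  (∀ x ∈ simplexSet d1, x ≠ xs → payoff A xs ys < payoff A x ys) ∧
  (∀ y ∈ simplexSet d2, y ≠ ys → payoff A xs y < payoff A xs ys)

/-- ℓ₁ normalization of a block. -/
def normPart {d : ℕ} (u : Vec d) : Vec d := (∑ i, |u i|)⁻¹ • u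

/-- ℓ₁ normalization with the convention 0/0 = (1/d)·1. -/
def normPart0 {d : ℕ} (u : Vec d) : Vec d :=
  if (∑ i, |u i|) = 0 then WithLp.toLp 2 (fun _ => (d : ℝ)⁻¹) else (∑ i, |u i|)⁻¹ • u

/-- The normalization operator g. -/
def gNorm {d1 d2 : ℕ} (z : Joint d1 d2) : Joint d1 d2 :=
  joinPt (normPart (xPart z)) (normPart (yPart z))

/-- The regret operator F. -/
def Fop {d1 d2 : ℕ} (A : Matrix (Fin d1) (Fin d2) ℝ) (z : Joint d1 d2) : Joint d1 d2 :=
  joinPt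
    (WithLp.toLp 2 (fun i => (∑ j, A i j * normPart (yPart z) j) -
      payoff A (normPart (xPart z)) (normPart (yPart z))))
    (WithLp.toLp 2 (fun j => -(∑ i, A i j * normPart (xPart z) i) +
      payoff A (normPart (xPart z)) (normPart (yPart z))))

/-- Spectral (ℓ₂ operator) norm of a matrix. -/
def opNorm {d1 d2 : ℕ} (A : Matrix (Fin d1) (Fin d2) ℝ) : ℝ :=
  ‖LinearMap.toContinuousLinearMap (Matrix.toEuclideanLin A)‖

/-- Lipschitz constant L_F = √6 ‖A‖_op max{d1,d2}. -/
def LF {d1 d2 : ℕ} (A : Matrix (Fin d1) (Fin d2) ℝ) : ℝ :=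
  Real.sqrt 6 * opNorm A * max (d1 : ℝ) (d2 : ℝ)

open Classical in
/-- Euclidean (metric) projection onto a set: the distance minimizer, when it exists. -/
def projOn {E : Type*} [NormedAddCommGroup E] [InnerProductSpace ℝ E]
    (S : Set E) (u : E) : E :=
  if h : ∃ p ∈ S, ∀ q ∈ S, ‖u - p‖ ≤ ‖u - q‖ then h.choose else u

/-- The set of Nash equilibria, in the joint space. -/
def nashSet {d1 d2 : ℕ} (A : Matrix (Fin d1) (Fin d2) ℝ) : Set (Joint d1 d2) :=
  {z | IsNash A (xPart z) (yPart z)}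

/-- SOL(Z_≥, F): solutions of the variational inequality. -/
def SolSet {d1 d2 : ℕ} (A : Matrix (Fin d1) (Fin d2) ℝ) : Set (Joint d1 d2) :=
  {z | z ∈ ZgeSet d1 d2 ∧ ∀ z' ∈ ZgeSet d1 d2, ⟪Fop A z, z - z'⟫ ≤ 0}

/-- p is a limit point of the sequence z: limit of a convergent subsequence. -/
def IsLimitPoint {E : Type*} [TopologicalSpace E] (z : ℕ → E) (p : E) : Prop :=
  ∃ φ : ℕ → ℕ, StrictMono φ ∧ Tendsto (z ∘ φ) atTop (𝓝 p)

/-- The ExRM⁺ dynamics: z are the main iterates, zh the half-iterates. -/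
def ExRM {d1 d2 : ℕ} (A : Matrix (Fin d1) (Fin d2) ℝ) (η : ℝ)
    (z zh : ℕ → Joint d1 d2) : Prop :=
  z 0 ∈ Zset d1 d2 ∧
  (∀ t, zh t = projOn (ZgeSet d1 d2) (z t - η • Fop A (z t))) ∧
  (∀ t, z (t + 1) = projOn (ZgeSet d1 d2) (z t - η • Fop A (zh t)))

/-- The SPRM⁺ dynamics (z^{-1} = w^0). -/
def SPRM {d1 d2 : ℕ} (A : Matrix (Fin d1) (Fin d2) ℝ) (η : ℝ)
    (w z : ℕ → Joint d1 d2) : Prop :=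
  w 0 ∈ Zset d1 d2 ∧
  z 0 = projOn (ZgeSet d1 d2) (w 0 - η • Fop A (w 0)) ∧
  (∀ t, z (t + 1) = projOn (ZgeSet d1 d2) (w (t + 1) - η • Fop A (z t))) ∧
  (∀ t, w (t + 1) = projOn (ZgeSet d1 d2) (w t - η • Fop A (z t)))

/-- z^{t-1} with the convention z^{-1} = w^0. -/
def zPrev {d1 d2 : ℕ} (w z : ℕ → Joint d1 d2) : ℕ → Joint d1 d2 :=
  fun t => if t = 0 then w 0 else z (t - 1)



/-! ### Auxiliary lemmas -/

section Aux

variable {d d1 d2 : ℕ}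

lemma norm_sq_eq_sum (x : Vec d) : ‖x‖^2 = ∑ i, (x i)^2 := by
  rw [EuclideanSpace.norm_eq, Real.sq_sqrt (by positivity)]
  simp [sq_abs]

lemma inner_eq_sum (x y : Vec d) : ⟪x, y⟫ = ∑ i, x i * y i := by
  simp [PiLp.inner_apply, RCLike.inner_apply, mul_comm]

lemma simplex_norm_le_one {x : Vec d} (hx : x ∈ simplexSet d) : ‖x‖ ≤ 1 := by
  obtain ⟨h0, h1⟩ := hx
  have h2 : ‖x‖^2 ≤ 1 := by
    rw [norm_sq_eq_sum]
    calc ∑ i, (x i)^2 ≤ ∑ i, x i := by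
          apply Finset.sum_le_sum
          intro i _
          have hle : x i ≤ 1 := by
            calc x i ≤ ∑ j, x j := Finset.single_le_sum (fun j _ => h0 j) (Finset.mem_univ i)
            _ = 1 := h1
          nlinarith [h0 i]
      _ = 1 := h1
  nlinarith [norm_nonneg x]

lemma simplex_nonempty (hd : 1 ≤ d) : (simplexSet d).Nonempty := by
  refine ⟨WithLp.toLp 2 (fun _ => (d : ℝ)⁻¹), fun i => by simp only [PiLp.toLp_apply]; positivity, ?_⟩
  have : (d:ℝ) ≠ 0 := by positivity
  simp [Finset.sum_const, Finset.card_univ, this]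

lemma simplex_subset_clipped : simplexSet d ⊆ clippedSet d :=
  fun x hx => ⟨hx.1, le_of_eq hx.2.symm⟩

lemma clipped_sum_abs {u : Vec d} (hu : u ∈ clippedSet d) : (∑ i, |u i|) = ∑ i, u i := by
  exact Finset.sum_congr rfl fun i _ => abs_of_nonneg (hu.1 i)

lemma clipped_sum_pos {u : Vec d} (hu : u ∈ clippedSet d) : 0 < ∑ i, u i :=
  lt_of_lt_of_le one_pos hu.2

lemma normPart_eq {u : Vec d} (hu : u ∈ clippedSet d) :
    normPart u = (∑ i, u i)⁻¹ • u := by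
  rw [normPart, clipped_sum_abs hu]

lemma normPart_mem_simplex {u : Vec d} (hu : u ∈ clippedSet d) :
    normPart u ∈ simplexSet d := by
  rw [normPart_eq hu]
  have ha : 0 < ∑ i, u i := clipped_sum_pos hu
  constructor
  · intro i
    exact mul_nonneg (inv_nonneg.2 ha.le) (hu.1 i)
  · simp only [PiLp.smul_apply, smul_eq_mul, ← Finset.mul_sum]
    field_simp

lemma normPart_norm_le {u : Vec d} (hu : u ∈ clippedSet d) : ‖normPart u‖ ≤ 1 :=
  simplex_norm_le_one (normPart_mem_simplex hu)

end Aux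
section Lip

variable {d : ℕ}

lemma vecSum_apply {m : ℕ} {ι : Type*} [Fintype ι] (f : ι → Vec m) (j : Fin m) :
    (∑ i, f i) j = ∑ i, f i j := by
  classical
  induction (Finset.univ : Finset ι) using Finset.induction_on with
  | empty => rfl
  | insert _ _ h ih => rw [Finset.sum_insert h, Finset.sum_insert h, PiLp.add_apply, ih]

/-- Key estimate: for `x'` in the simplex, `‖Δ - (∑ Δ) • x'‖ ≤ √d ‖Δ‖`. -/
lemma key_shift_bound {x' : Vec d} (hx' : x' ∈ simplexSet d) (Δ : Vec d) :
    ‖Δ - (∑ i, Δ i) • x'‖ ≤ Real.sqrt d * ‖Δ‖ := by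
  classical
  set s : ℝ := ∑ i, Δ i with hs
  -- vertex bound
  have vert : ∀ i : Fin d, ‖Δ - s • (EuclideanSpace.single i (1:ℝ))‖ ≤ Real.sqrt d * ‖Δ‖ := by
    intro i
    have hsq : ‖Δ - s • (EuclideanSpace.single i (1:ℝ))‖^2 ≤ d * ‖Δ‖^2 := by
      rw [norm_sq_eq_sum, norm_sq_eq_sum]
      have hterm : ∀ j, ((Δ - s • (EuclideanSpace.single i (1:ℝ))) j)^2
          = (Δ j - s * (if j = i then 1 else 0))^2 := by
        intro j
        simp [EuclideanSpace.single_apply]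
      rw [Finset.sum_congr rfl (fun j _ => hterm j)]
      have hsplit : ∑ j, (Δ j - s * (if j = i then 1 else 0))^2
          = (∑ j, (Δ j)^2) - 2 * s * Δ i + s^2 := by
        have : ∀ j, (Δ j - s * (if j = i then 1 else 0))^2
            = (Δ j)^2 - (if j = i then 2 * s * Δ j - s^2 else 0) := by
          intro j; by_cases h : j = i <;> simp [h] <;> ring
        rw [Finset.sum_congr rfl (fun j _ => this j), Finset.sum_sub_distrib,
          Finset.sum_ite_eq' Finset.univ i (fun j => 2 * s * Δ j - s^2)]
        simp; ring
      rw [hsplit]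
      -- (s - Δ i)^2 ≤ (d-1) * ∑_{j ≠ i} Δ j ^2
      have hcs : (s - Δ i)^2 ≤ (d - 1 : ℝ) * ((∑ j, (Δ j)^2) - (Δ i)^2) := by
        have hserase : s - Δ i = ∑ j ∈ Finset.univ.erase i, Δ j := by
          rw [hs, ← Finset.add_sum_erase Finset.univ Δ (Finset.mem_univ i)]; ring
        have hcard : ((Finset.univ.erase i).card : ℝ) = (d : ℝ) - 1 := by
          have hd1 : 1 ≤ d := Fin.pos i
          rw [Finset.card_erase_of_mem (Finset.mem_univ i), Finset.card_univ, Fintype.card_fin]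
          push_cast [Nat.cast_sub hd1]
          ring
  
        have hsum2 : (∑ j ∈ Finset.univ.erase i, Δ j)^2
            ≤ ((Finset.univ.erase i).card : ℝ) * ∑ j ∈ Finset.univ.erase i, (Δ j)^2 := by
          simpa using sq_sum_le_card_mul_sum_sq (s := Finset.univ.erase i) (f := fun j => Δ j)
        have hserase2 : ∑ j ∈ Finset.univ.erase i, (Δ j)^2
            = (∑ j, (Δ j)^2) - (Δ i)^2 := by
          rw [← Finset.add_sum_erase Finset.univ (fun j => (Δ j)^2) (Finset.mem_univ i)]; ring
        rw [hserase]
        calc (∑ j ∈ Finset.univ.erase i, Δ j)^2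
            ≤ ((Finset.univ.erase i).card : ℝ) * ∑ j ∈ Finset.univ.erase i, (Δ j)^2 := hsum2
          _ = ((d:ℝ) - 1) * ((∑ j, (Δ j)^2) - (Δ i)^2) := by rw [hcard, hserase2]
      have hd1 : (1:ℝ) ≤ d := by
        have : 0 < d := Fin.pos i
        exact_mod_cast this
      nlinarith [sq_nonneg (Δ i), sq_nonneg (s - Δ i)]
    have h0 : (0:ℝ) ≤ Real.sqrt d * ‖Δ‖ := by positivity
    nlinarith [norm_nonneg (Δ - s • (EuclideanSpace.single i (1:ℝ))), Real.sq_sqrt (show (0:ℝ) ≤ d by positivity)]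
  -- convex combination
  have hrepr : Δ - s • x' = ∑ i, x' i • (Δ - s • (EuclideanSpace.single i (1:ℝ))) := by
    have h1 : ∑ i, x' i • Δ = Δ := by
      rw [← Finset.sum_smul, hx'.2, one_smul]
    have h2 : ∑ i, x' i • (s • (EuclideanSpace.single i (1:ℝ))) = s • x' := by
      ext j
      rw [vecSum_apply]
      simp only [PiLp.smul_apply, EuclideanSpace.single_apply, smul_eq_mul, mul_ite,
        mul_one, mul_zero]
      rw [Finset.sum_ite_eq Finset.univ j (fun i => x' i * s)]
      simp [mul_comm]
    calc Δ - s • x' = (∑ i, x' i • Δ) - ∑ i, x' i • (s • (EuclideanSpace.single i (1:ℝ))) := by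
          rw [h1, h2]
      _ = ∑ i, x' i • (Δ - s • (EuclideanSpace.single i (1:ℝ))) := by
          rw [← Finset.sum_sub_distrib]
          exact Finset.sum_congr rfl fun i _ => (smul_sub _ _ _).symm
  rw [hrepr]
  calc ‖∑ i, x' i • (Δ - s • (EuclideanSpace.single i (1:ℝ)))‖
      ≤ ∑ i, ‖x' i • (Δ - s • (EuclideanSpace.single i (1:ℝ)))‖ := norm_sum_le _ _
    _ ≤ ∑ i, x' i * (Real.sqrt d * ‖Δ‖) := by
        apply Finset.sum_le_sum
        intro i _
        rw [norm_smul, Real.norm_eq_abs, abs_of_nonneg (hx'.1 i)]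
        exact mul_le_mul_of_nonneg_left (vert i) (hx'.1 i)
    _ = Real.sqrt d * ‖Δ‖ := by rw [← Finset.sum_mul, hx'.2, one_mul]

/-- `normPart` is `√d`-Lipschitz on the clipped set. -/
lemma normPart_lipschitz {u u' : Vec d} (hu : u ∈ clippedSet d) (hu' : u' ∈ clippedSet d) :
    ‖normPart u - normPart u'‖ ≤ Real.sqrt d * ‖u - u'‖ := by
  have ha : (1:ℝ) ≤ ∑ i, u i := hu.2
  have ha' : (1:ℝ) ≤ ∑ i, u' i := hu'.2
  have ha0 : (0:ℝ) < ∑ i, u i := lt_of_lt_of_le one_pos ha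
  have ha0' : (0:ℝ) < ∑ i, u' i := lt_of_lt_of_le one_pos ha'
  set a : ℝ := ∑ i, u i
  set a' : ℝ := ∑ i, u' i
  have hsub : ∑ i, (u - u') i = a - a' := by
    simp [Finset.sum_sub_distrib]; rfl
  have hrepr : normPart u - normPart u'
      = a⁻¹ • ((u - u') - (∑ i, (u - u') i) • normPart u') := by
    rw [normPart_eq hu, normPart_eq hu', hsub]
    change a⁻¹ • u - a'⁻¹ • u' = a⁻¹ • (u - u' - (a - a') • a'⁻¹ • u')
    ext j
    simp only [PiLp.smul_apply, PiLp.sub_apply, smul_eq_mul]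
    field_simp
    ring
  rw [hrepr, norm_smul, Real.norm_eq_abs, abs_of_pos (inv_pos.2 ha0)]
  have hkey := key_shift_bound (normPart_mem_simplex hu') (u - u')
  have hinv : a⁻¹ ≤ 1 := by
    rw [inv_le_one_iff₀]; right; exact ha
  calc a⁻¹ * ‖(u - u') - (∑ i, (u - u') i) • normPart u'‖
      ≤ 1 * ‖(u - u') - (∑ i, (u - u') i) • normPart u'‖ := by
        apply mul_le_mul_of_nonneg_right hinv (norm_nonneg _)
    _ = ‖(u - u') - (∑ i, (u - u') i) • normPart u'‖ := one_mul _
    _ ≤ Real.sqrt d * ‖u - u'‖ := hkey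

end Lip
section MatrixLemmas

variable {d1 d2 : ℕ}

/-- Matrix-vector product as a Euclidean vector. -/
def mulVecE (A : Matrix (Fin d1) (Fin d2) ℝ) (y : Vec d2) : Vec d1 :=
  WithLp.toLp 2 (fun i => ∑ j, A i j * y j)

lemma mulVecE_eq_toEuclideanLin (A : Matrix (Fin d1) (Fin d2) ℝ) (y : Vec d2) :
    mulVecE A y = Matrix.toEuclideanLin A y := by
  ext i; simp [mulVecE, Matrix.toEuclideanLin_apply, Matrix.mulVec, dotProduct]

lemma opNorm_nonneg (A : Matrix (Fin d1) (Fin d2) ℝ) : 0 ≤ opNorm A := norm_nonneg _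

lemma norm_mulVecE_le (A : Matrix (Fin d1) (Fin d2) ℝ) (y : Vec d2) :
    ‖mulVecE A y‖ ≤ opNorm A * ‖y‖ := by
  rw [mulVecE_eq_toEuclideanLin]
  have := (LinearMap.toContinuousLinearMap (Matrix.toEuclideanLin A)).le_opNorm y
  simpa [opNorm] using this

lemma payoff_eq_inner (A : Matrix (Fin d1) (Fin d2) ℝ) (x : Vec d1) (y : Vec d2) :
    payoff A x y = ⟪x, mulVecE A y⟫ := by
  rw [inner_eq_sum]
  simp only [payoff, mulVecE, PiLp.toLp_apply, Finset.mul_sum]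
  exact Finset.sum_congr rfl fun i _ => Finset.sum_congr rfl fun j _ => by ring

lemma abs_payoff_le (A : Matrix (Fin d1) (Fin d2) ℝ) (x : Vec d1) (y : Vec d2) :
    |payoff A x y| ≤ opNorm A * ‖x‖ * ‖y‖ := by
  rw [payoff_eq_inner]
  calc |⟪x, mulVecE A y⟫| ≤ ‖x‖ * ‖mulVecE A y‖ := abs_real_inner_le_norm _ _
    _ ≤ ‖x‖ * (opNorm A * ‖y‖) := by
        apply mul_le_mul_of_nonneg_left (norm_mulVecE_le A y) (norm_nonneg x)
    _ = opNorm A * ‖x‖ * ‖y‖ := by ring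

lemma abs_payoff_le_simplex (A : Matrix (Fin d1) (Fin d2) ℝ) {x : Vec d1} {y : Vec d2}
    (hx : x ∈ simplexSet d1) (hy : y ∈ simplexSet d2) : |payoff A x y| ≤ opNorm A := by
  calc |payoff A x y| ≤ opNorm A * ‖x‖ * ‖y‖ := abs_payoff_le A x y
    _ ≤ opNorm A * 1 * 1 := by
        apply mul_le_mul (mul_le_mul_of_nonneg_left (simplex_norm_le_one hx) (opNorm_nonneg A))
          (simplex_norm_le_one hy) (norm_nonneg y)
        have := opNorm_nonneg A
        linarith
    _ = opNorm A := by ring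

/-- transpose mulVec bound via the payoff trick. -/
lemma norm_mulVecT_le (A : Matrix (Fin d1) (Fin d2) ℝ) (x : Vec d1) :
    ‖mulVecE A.transpose x‖ ≤ opNorm A * ‖x‖ := by
  set v : Vec d2 := mulVecE A.transpose x with hv
  have hinner : ⟪v, v⟫ = payoff A x v := by
    rw [inner_eq_sum, payoff, Finset.sum_comm]
    apply Finset.sum_congr rfl
    intro j _
    have hvj : v j = ∑ i, A i j * x i := by
      simp [hv, mulVecE, Matrix.transpose_apply]
    calc v j * v j = (∑ i, A i j * x i) * v j := by rw [← hvj]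
      _ = ∑ i, x i * A i j * v j := by
          rw [Finset.sum_mul]
          exact Finset.sum_congr rfl fun i _ => by ring
  have h1 : ‖v‖^2 ≤ opNorm A * ‖x‖ * ‖v‖ := by
    rw [← real_inner_self_eq_norm_sq, hinner]
    exact le_trans (le_abs_self _) (abs_payoff_le A x v)
  rcases eq_or_lt_of_le (norm_nonneg v) with h | h
  · rw [← h]
    have := opNorm_nonneg A
    have := norm_nonneg x
    simp
    positivity
  · nlinarith

lemma payoff_sub_left (A : Matrix (Fin d1) (Fin d2) ℝ) (x x' : Vec d1) (y : Vec d2) :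
    payoff A (x - x') y = payoff A x y - payoff A x' y := by
  simp only [payoff, PiLp.sub_apply, ← Finset.sum_sub_distrib]
  exact Finset.sum_congr rfl fun i _ => Finset.sum_congr rfl fun j _ => by ring

lemma payoff_sub_right (A : Matrix (Fin d1) (Fin d2) ℝ) (x : Vec d1) (y y' : Vec d2) :
    payoff A x (y - y') = payoff A x y - payoff A x y' := by
  simp only [payoff, PiLp.sub_apply, ← Finset.sum_sub_distrib]
  exact Finset.sum_congr rfl fun i _ => Finset.sum_congr rfl fun j _ => by ring

end MatrixLemmas
section JointLemmas

variable {d1 d2 : ℕ}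

@[simp] lemma xPart_joinPt (x : Vec d1) (y : Vec d2) : xPart (joinPt x y) = x := rfl
@[simp] lemma yPart_joinPt (x : Vec d1) (y : Vec d2) : yPart (joinPt x y) = y := rfl

lemma xPart_sub (a b : Joint d1 d2) : xPart (a - b) = xPart a - xPart b := rfl
lemma yPart_sub (a b : Joint d1 d2) : yPart (a - b) = yPart a - yPart b := rfl

lemma inner_split (a b : Joint d1 d2) :
    ⟪a, b⟫ = ⟪xPart a, xPart b⟫ + ⟪yPart a, yPart b⟫ := by
  simp only [PiLp.inner_apply, RCLike.inner_apply, starRingEnd_apply, star_trivial]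
  rw [Fintype.sum_sum_type]
  rfl

lemma norm_sq_split (a : Joint d1 d2) : ‖a‖^2 = ‖xPart a‖^2 + ‖yPart a‖^2 := by
  rw [← real_inner_self_eq_norm_sq, ← real_inner_self_eq_norm_sq, ← real_inner_self_eq_norm_sq]
  exact inner_split a a

lemma norm_xPart_le (a : Joint d1 d2) : ‖xPart a‖ ≤ ‖a‖ := by
  have := norm_sq_split a
  nlinarith [norm_nonneg (xPart a), norm_nonneg (yPart a), norm_nonneg a, sq_nonneg (‖yPart a‖)]

lemma norm_yPart_le (a : Joint d1 d2) : ‖yPart a‖ ≤ ‖a‖ := by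
  have := norm_sq_split a
  nlinarith [norm_nonneg (xPart a), norm_nonneg (yPart a), norm_nonneg a]

lemma norm_joint_le (a : Joint d1 d2) : ‖a‖ ≤ ‖xPart a‖ + ‖yPart a‖ := by
  have := norm_sq_split a
  nlinarith [norm_nonneg (xPart a), norm_nonneg (yPart a), norm_nonneg a,
    mul_nonneg (norm_nonneg (xPart a)) (norm_nonneg (yPart a))]

/-- the all-ones vector -/
def onesV (d : ℕ) : Vec d := WithLp.toLp 2 (fun _ => (1:ℝ))

lemma norm_onesV (d : ℕ) : ‖onesV d‖ = Real.sqrt d := by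
  rw [EuclideanSpace.norm_eq]
  simp [onesV]

lemma dist_Zset_le {a b : Joint d1 d2} (ha : a ∈ Zset d1 d2) (hb : b ∈ Zset d1 d2) :
    ‖a - b‖ ≤ 2 * Real.sqrt 2 := by
  have hx : ‖xPart (a - b)‖ ≤ 2 := by
    rw [xPart_sub]
    calc ‖xPart a - xPart b‖ ≤ ‖xPart a‖ + ‖xPart b‖ := norm_sub_le _ _
      _ ≤ 1 + 1 := add_le_add (simplex_norm_le_one ha.1) (simplex_norm_le_one hb.1)
      _ = 2 := by norm_num
  have hy : ‖yPart (a - b)‖ ≤ 2 := by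
    rw [yPart_sub]
    calc ‖yPart a - yPart b‖ ≤ ‖yPart a‖ + ‖yPart b‖ := norm_sub_le _ _
      _ ≤ 1 + 1 := add_le_add (simplex_norm_le_one ha.2) (simplex_norm_le_one hb.2)
      _ = 2 := by norm_num
  have hsq : ‖a - b‖^2 ≤ 8 := by
    rw [norm_sq_split]
    nlinarith [norm_nonneg (xPart (a-b)), norm_nonneg (yPart (a-b))]
  have h8 : (8:ℝ) = (2 * Real.sqrt 2)^2 := by
    rw [mul_pow, Real.sq_sqrt (by norm_num : (0:ℝ) ≤ 2)]; norm_num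
  nlinarith [norm_nonneg (a - b), Real.sqrt_nonneg 2]

lemma Zset_subset_ZgeSet : Zset d1 d2 ⊆ ZgeSet d1 d2 :=
  fun z hz => ⟨simplex_subset_clipped hz.1, simplex_subset_clipped hz.2⟩

end JointLemmas
section Projection

variable {d1 d2 : ℕ}

lemma ZgeSet_nonempty (hd1 : 1 ≤ d1) (hd2 : 1 ≤ d2) : (ZgeSet d1 d2).Nonempty := by
  obtain ⟨x, hx⟩ := simplex_nonempty hd1
  obtain ⟨y, hy⟩ := simplex_nonempty hd2
  exact ⟨joinPt x y, simplex_subset_clipped hx, simplex_subset_clipped hy⟩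

lemma clippedSet_closed_conds {d : ℕ} : IsClosed (clippedSet d) := by
  have h1 : IsClosed {u : Vec d | ∀ i, 0 ≤ u i} := by
    have : {u : Vec d | ∀ i, 0 ≤ u i} = ⋂ i, {u : Vec d | 0 ≤ u i} := by
      ext u; simp
    rw [this]
    exact isClosed_iInter fun i => isClosed_le continuous_const (by fun_prop)
  have h2 : IsClosed {u : Vec d | 1 ≤ ∑ i, u i} :=
    isClosed_le continuous_const (by fun_prop)
  exact (h1.inter h2)

lemma ZgeSet_closed : IsClosed (ZgeSet d1 d2) := by
  have h1 : IsClosed {z : Joint d1 d2 | xPart z ∈ clippedSet d1} := by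
    have hx : Continuous fun z : Joint d1 d2 => xPart z := by
      unfold xPart
      fun_prop
    exact clippedSet_closed_conds.preimage hx
  have h2 : IsClosed {z : Joint d1 d2 | yPart z ∈ clippedSet d2} := by
    have hy : Continuous fun z : Joint d1 d2 => yPart z := by
      unfold yPart
      fun_prop
    exact clippedSet_closed_conds.preimage hy
  exact h1.inter h2

lemma ZgeSet_convex : Convex ℝ (ZgeSet d1 d2) := by
  intro a ha b hb s t hs ht hst
  constructor
  · constructor
    · intro i
      have := ha.1.1 i; have := hb.1.1 i
      have : (s • a + t • b) (Sum.inl i) = s * a (Sum.inl i) + t * b (Sum.inl i) := rfl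
      rw [xPart]; simp only [this]
      have h1 := ha.1.1 i; have h2 := hb.1.1 i
      positivity
    · have hsum : ∑ i, (s • a + t • b) (Sum.inl i)
          = s * (∑ i, a (Sum.inl i)) + t * (∑ i, b (Sum.inl i)) := by
        rw [Finset.mul_sum, Finset.mul_sum, ← Finset.sum_add_distrib]
        rfl
      show (1:ℝ) ≤ ∑ i, (s • a + t • b) (Sum.inl i)
      rw [hsum]
      have h1 : (1:ℝ) ≤ ∑ i, a (Sum.inl i) := ha.1.2
      have h2 : (1:ℝ) ≤ ∑ i, b (Sum.inl i) := hb.1.2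
      nlinarith
  · constructor
    · intro j
      have : (s • a + t • b) (Sum.inr j) = s * a (Sum.inr j) + t * b (Sum.inr j) := rfl
      rw [yPart]; simp only [this]
      have h1 := ha.2.1 j; have h2 := hb.2.1 j
      positivity
    · have hsum : ∑ j, (s • a + t • b) (Sum.inr j)
          = s * (∑ j, a (Sum.inr j)) + t * (∑ j, b (Sum.inr j)) := by
        rw [Finset.mul_sum, Finset.mul_sum, ← Finset.sum_add_distrib]
        rfl
      show (1:ℝ) ≤ ∑ j, (s • a + t • b) (Sum.inr j)
      rw [hsum]
      have h1 : (1:ℝ) ≤ ∑ j, a (Sum.inr j) := ha.2.2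
      have h2 : (1:ℝ) ≤ ∑ j, b (Sum.inr j) := hb.2.2
      nlinarith

/-- The projection onto a nonempty closed convex set satisfies the variational inequality. -/
lemma projOn_spec {E : Type*} [NormedAddCommGroup E] [InnerProductSpace ℝ E] [CompleteSpace E]
    {S : Set E} (hne : S.Nonempty) (hc : IsClosed S) (hconv : Convex ℝ S) (u : E) :
    projOn S u ∈ S ∧ ∀ w ∈ S, ⟪u - projOn S u, w - projOn S u⟫ ≤ 0 := by
  obtain ⟨v, hvS, hv⟩ := exists_norm_eq_iInf_of_complete_convex hne (hc.isComplete) hconv u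
  haveI : Nonempty S := hne.to_subtype
  have hbdd : BddBelow (Set.range fun w : S => ‖u - w‖) := ⟨0, by rintro r ⟨w, rfl⟩; exact norm_nonneg _⟩
  have hmin : ∀ q ∈ S, ‖u - v‖ ≤ ‖u - q‖ := by
    intro q hq
    rw [hv]
    exact ciInf_le hbdd ⟨q, hq⟩
  have hex : ∃ p ∈ S, ∀ q ∈ S, ‖u - p‖ ≤ ‖u - q‖ := ⟨v, hvS, hmin⟩
  have hproj : projOn S u = hex.choose := by
    rw [projOn, dif_pos hex]
  obtain ⟨hpS, hp⟩ := hex.choose_spec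
  have heq : ‖u - hex.choose‖ = ⨅ w : S, ‖u - w‖ := by
    apply le_antisymm
    · exact le_ciInf fun w => hp w w.2
    · exact ciInf_le hbdd ⟨hex.choose, hpS⟩
  constructor
  · rw [hproj]; exact hpS
  · intro w hw
    rw [hproj]
    exact (norm_eq_iInf_iff_real_inner_le_zero hconv hpS).1 heq w hw

lemma projZge_spec (hd1 : 1 ≤ d1) (hd2 : 1 ≤ d2) (u : Joint d1 d2) :
    projOn (ZgeSet d1 d2) u ∈ ZgeSet d1 d2 ∧
      ∀ w ∈ ZgeSet d1 d2, ⟪u - projOn (ZgeSet d1 d2) u, w - projOn (ZgeSet d1 d2) u⟫ ≤ 0 :=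
  projOn_spec (ZgeSet_nonempty hd1 hd2) ZgeSet_closed ZgeSet_convex u

end Projection
section FopLemmas

variable {d1 d2 : ℕ}

lemma payoff_smul_left (A : Matrix (Fin d1) (Fin d2) ℝ) (c : ℝ) (x : Vec d1) (y : Vec d2) :
    payoff A (c • x) y = c * payoff A x y := by
  simp only [payoff, PiLp.smul_apply, smul_eq_mul, Finset.mul_sum]
  exact Finset.sum_congr rfl fun i _ => Finset.sum_congr rfl fun j _ => by ring

lemma payoff_smul_right (A : Matrix (Fin d1) (Fin d2) ℝ) (c : ℝ) (x : Vec d1) (y : Vec d2) :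
    payoff A x (c • y) = c * payoff A x y := by
  simp only [payoff, PiLp.smul_apply, smul_eq_mul, Finset.mul_sum]
  exact Finset.sum_congr rfl fun i _ => Finset.sum_congr rfl fun j _ => by ring

lemma smul_normPart {d : ℕ} {u : Vec d} (hu : u ∈ clippedSet d) :
    (∑ i, u i) • normPart u = u := by
  rw [normPart_eq hu, smul_smul, mul_inv_cancel₀ (ne_of_gt (clipped_sum_pos hu)), one_smul]

lemma inner_onesV {d : ℕ} (v : Vec d) : ⟪onesV d, v⟫ = ∑ i, v i := by
  rw [inner_eq_sum]; simp [onesV]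

lemma payoffT_inner (A : Matrix (Fin d1) (Fin d2) ℝ) (x : Vec d1) (v : Vec d2) :
    ⟪mulVecE A.transpose x, v⟫ = payoff A x v := by
  rw [inner_eq_sum, payoff, Finset.sum_comm]
  apply Finset.sum_congr rfl
  intro j _
  simp only [mulVecE, Matrix.transpose_apply, Finset.sum_mul]
  exact Finset.sum_congr rfl fun i _ => by ring

lemma Fop_xPart (A : Matrix (Fin d1) (Fin d2) ℝ) (z : Joint d1 d2) :
    xPart (Fop A z) = mulVecE A (normPart (yPart z))
      - payoff A (normPart (xPart z)) (normPart (yPart z)) • onesV d1 := by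
  ext i
  simp [Fop, mulVecE, onesV, xPart, joinPt, PiLp.sub_apply]

lemma Fop_yPart (A : Matrix (Fin d1) (Fin d2) ℝ) (z : Joint d1 d2) :
    yPart (Fop A z) = -mulVecE A.transpose (normPart (xPart z))
      + payoff A (normPart (xPart z)) (normPart (yPart z)) • onesV d2 := by
  ext j
  simp [Fop, mulVecE, onesV, yPart, joinPt, PiLp.add_apply, Matrix.transpose_apply]

/-- Norm bound on F over the clipped set. -/
lemma norm_Fop_le (A : Matrix (Fin d1) (Fin d2) ℝ) {z : Joint d1 d2} (hz : z ∈ ZgeSet d1 d2) :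
    ‖Fop A z‖ ≤ opNorm A * (2 + Real.sqrt d1 + Real.sqrt d2) := by
  set xh := normPart (xPart z)
  set yh := normPart (yPart z)
  have hxh : ‖xh‖ ≤ 1 := normPart_norm_le hz.1
  have hyh : ‖yh‖ ≤ 1 := normPart_norm_le hz.2
  have hp : |payoff A xh yh| ≤ opNorm A :=
    abs_payoff_le_simplex A (normPart_mem_simplex hz.1) (normPart_mem_simplex hz.2)
  have hA := opNorm_nonneg A
  have h1 : ‖xPart (Fop A z)‖ ≤ opNorm A * (1 + Real.sqrt d1) := by
    rw [Fop_xPart]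
    calc ‖mulVecE A yh - payoff A xh yh • onesV d1‖
        ≤ ‖mulVecE A yh‖ + ‖payoff A xh yh • onesV d1‖ := norm_sub_le _ _
      _ ≤ opNorm A * 1 + opNorm A * Real.sqrt d1 := by
          apply add_le_add
          · calc ‖mulVecE A yh‖ ≤ opNorm A * ‖yh‖ := norm_mulVecE_le A yh
              _ ≤ opNorm A * 1 := by nlinarith [norm_nonneg yh]
          · rw [norm_smul, Real.norm_eq_abs, norm_onesV]
            exact mul_le_mul_of_nonneg_right hp (Real.sqrt_nonneg _)
      _ = opNorm A * (1 + Real.sqrt d1) := by ring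
  have h2 : ‖yPart (Fop A z)‖ ≤ opNorm A * (1 + Real.sqrt d2) := by
    rw [Fop_yPart]
    calc ‖-mulVecE A.transpose xh + payoff A xh yh • onesV d2‖
        ≤ ‖-mulVecE A.transpose xh‖ + ‖payoff A xh yh • onesV d2‖ := norm_add_le _ _
      _ ≤ opNorm A * 1 + opNorm A * Real.sqrt d2 := by
          apply add_le_add
          · rw [norm_neg]
            calc ‖mulVecE A.transpose xh‖ ≤ opNorm A * ‖xh‖ := norm_mulVecT_le A xh
              _ ≤ opNorm A * 1 := by nlinarith [norm_nonneg xh]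
          · rw [norm_smul, Real.norm_eq_abs, norm_onesV]
            exact mul_le_mul_of_nonneg_right hp (Real.sqrt_nonneg _)
      _ = opNorm A * (1 + Real.sqrt d2) := by ring
  calc ‖Fop A z‖ ≤ ‖xPart (Fop A z)‖ + ‖yPart (Fop A z)‖ := norm_joint_le _
    _ ≤ opNorm A * (1 + Real.sqrt d1) + opNorm A * (1 + Real.sqrt d2) := add_le_add h1 h2
    _ = opNorm A * (2 + Real.sqrt d1 + Real.sqrt d2) := by ring

/-- The fundamental identity for the regret operator. -/
lemma inner_Fop (A : Matrix (Fin d1) (Fin d2) ℝ) {z : Joint d1 d2} (hz : z ∈ ZgeSet d1 d2)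
    {x' : Vec d1} {y' : Vec d2} (hx' : x' ∈ simplexSet d1) (hy' : y' ∈ simplexSet d2) :
    ⟪Fop A z, z - joinPt x' y'⟫
      = payoff A (normPart (xPart z)) y' - payoff A x' (normPart (yPart z)) := by
  set xh := normPart (xPart z) with hxh
  set yh := normPart (yPart z) with hyh
  set p := payoff A xh yh with hpdef
  set a := ∑ i, (xPart z) i with hadef
  set b := ∑ j, (yPart z) j with hbdef
  have hua : xPart z = a • xh := (smul_normPart hz.1).symm
  have hwb : yPart z = b • yh := (smul_normPart hz.2).symm
  rw [inner_split]
  have hx1 : ⟪xPart (Fop A z), xPart (z - joinPt x' y')⟫ = p - payoff A x' yh := by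
    rw [xPart_sub, Fop_xPart, xPart_joinPt]
    rw [inner_sub_left, inner_sub_right, inner_sub_right]
    have e1 : ⟪mulVecE A yh, xPart z⟫ = a * p := by
      rw [real_inner_comm, ← payoff_eq_inner, hua, payoff_smul_left]
    have e2 : ⟪mulVecE A yh, x'⟫ = payoff A x' yh := by
      rw [real_inner_comm, ← payoff_eq_inner]
    have e3 : ⟪p • onesV d1, xPart z⟫ = p * a := by
      rw [real_inner_smul_left, inner_onesV]
    have e4 : ⟪p • onesV d1, x'⟫ = p * 1 := by
      rw [real_inner_smul_left, inner_onesV, hx'.2]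
    rw [e1, e2, e3, e4]
    ring
  have hy1 : ⟪yPart (Fop A z), yPart (z - joinPt x' y')⟫ = payoff A xh y' - p := by
    rw [yPart_sub, Fop_yPart, yPart_joinPt]
    rw [inner_add_left, inner_sub_right, inner_sub_right, inner_neg_left, inner_neg_left]
    have e1 : ⟪mulVecE A.transpose xh, yPart z⟫ = b * p := by
      rw [payoffT_inner, hwb, payoff_smul_right]
    have e2 : ⟪mulVecE A.transpose xh, y'⟫ = payoff A xh y' := payoffT_inner A xh y'
    have e3 : ⟪p • onesV d2, yPart z⟫ = p * b := by
      rw [real_inner_smul_left, inner_onesV]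
    have e4 : ⟪p • onesV d2, y'⟫ = p * 1 := by
      rw [real_inner_smul_left, inner_onesV, hy'.2]
    rw [e1, e2, e3, e4]
    ring
  rw [hx1, hy1]
  ring

end FopLemmas
section FopLip

variable {d1 d2 : ℕ}

/-- Lipschitz bound for the regret operator on the clipped set. -/
lemma Fop_lipschitz (A : Matrix (Fin d1) (Fin d2) ℝ) {z z' : Joint d1 d2}
    (hz : z ∈ ZgeSet d1 d2) (hz' : z' ∈ ZgeSet d1 d2) :
    ‖Fop A z - Fop A z'‖
      ≤ (Real.sqrt (max (d1:ℝ) (d2:ℝ)) + 2 * max (d1:ℝ) (d2:ℝ)) * opNorm A * ‖z - z'‖ := by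
  set dm : ℝ := max (d1:ℝ) (d2:ℝ) with hdm
  set r : ℝ := Real.sqrt dm with hr
  have hdm0 : 0 ≤ dm := le_max_of_le_left (Nat.cast_nonneg d1)
  have hr0 : 0 ≤ r := Real.sqrt_nonneg _
  have hr2 : r^2 = dm := Real.sq_sqrt hdm0
  have hA := opNorm_nonneg A
  set xh := normPart (xPart z)
  set yh := normPart (yPart z)
  set xh' := normPart (xPart z')
  set yh' := normPart (yPart z')
  set u : ℝ := ‖xPart z - xPart z'‖ with hu
  set v : ℝ := ‖yPart z - yPart z'‖ with hv
  have hu0 : 0 ≤ u := norm_nonneg _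
  have hv0 : 0 ≤ v := norm_nonneg _
  have hd1r : Real.sqrt d1 ≤ r := Real.sqrt_le_sqrt (le_max_left _ _)
  have hd2r : Real.sqrt d2 ≤ r := Real.sqrt_le_sqrt (le_max_right _ _)
  -- Lipschitz of normalization
  have hxL : ‖xh - xh'‖ ≤ r * u := by
    calc ‖xh - xh'‖ ≤ Real.sqrt d1 * ‖xPart z - xPart z'‖ := normPart_lipschitz hz.1 hz'.1
      _ ≤ r * u := by rw [← hu]; exact mul_le_mul_of_nonneg_right hd1r hu0
  have hyL : ‖yh - yh'‖ ≤ r * v := by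
    calc ‖yh - yh'‖ ≤ Real.sqrt d2 * ‖yPart z - yPart z'‖ := normPart_lipschitz hz.2 hz'.2
      _ ≤ r * v := by rw [← hv]; exact mul_le_mul_of_nonneg_right hd2r hv0
  have hyh1 : ‖yh‖ ≤ 1 := normPart_norm_le hz.2
  have hxh'1 : ‖xh'‖ ≤ 1 := normPart_norm_le hz'.1
  -- payoff difference
  set p := payoff A xh yh
  set p' := payoff A xh' yh'
  have hpd : |p - p'| ≤ opNorm A * (r * u + r * v) := by
    have hsplit : p - p' = payoff A (xh - xh') yh + payoff A xh' (yh - yh') := by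
      rw [payoff_sub_left, payoff_sub_right]; ring
    rw [hsplit]
    calc |payoff A (xh - xh') yh + payoff A xh' (yh - yh')|
        ≤ |payoff A (xh - xh') yh| + |payoff A xh' (yh - yh')| := abs_add_le _ _
      _ ≤ opNorm A * ‖xh - xh'‖ * ‖yh‖ + opNorm A * ‖xh'‖ * ‖yh - yh'‖ :=
          add_le_add (abs_payoff_le A _ _) (abs_payoff_le A _ _)
      _ ≤ opNorm A * (r * u) * 1 + opNorm A * 1 * (r * v) := by
          apply add_le_add
          · apply mul_le_mul (mul_le_mul_of_nonneg_left hxL hA) hyh1 (norm_nonneg _)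
            positivity
          · apply mul_le_mul (mul_le_mul_of_nonneg_left hxh'1 hA) hyL (norm_nonneg _)
            positivity
      _ = opNorm A * (r * u + r * v) := by ring
  -- block bounds
  have hxF : ‖xPart (Fop A z - Fop A z')‖ ≤ opNorm A * (dm * u + (r + dm) * v) := by
    rw [xPart_sub, Fop_xPart, Fop_xPart]
    have hrw : mulVecE A yh - p • onesV d1 - (mulVecE A yh' - p' • onesV d1)
        = mulVecE A (yh - yh') - (p - p') • onesV d1 := by
      have hmv : mulVecE A (yh - yh') = mulVecE A yh - mulVecE A yh' := by
        ext i
        simp only [mulVecE, PiLp.toLp_apply, PiLp.sub_apply, ← Finset.sum_sub_distrib]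
        exact Finset.sum_congr rfl fun j _ => by ring
      rw [hmv, sub_smul]
      abel
    rw [hrw]
    calc ‖mulVecE A (yh - yh') - (p - p') • onesV d1‖
        ≤ ‖mulVecE A (yh - yh')‖ + ‖(p - p') • onesV d1‖ := norm_sub_le _ _
      _ ≤ opNorm A * (r * v) + opNorm A * (r * u + r * v) * r := by
          apply add_le_add
          · calc ‖mulVecE A (yh - yh')‖ ≤ opNorm A * ‖yh - yh'‖ := norm_mulVecE_le A _
              _ ≤ opNorm A * (r * v) := mul_le_mul_of_nonneg_left hyL hA
          · rw [norm_smul, Real.norm_eq_abs, norm_onesV]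
            calc |p - p'| * Real.sqrt d1 ≤ (opNorm A * (r * u + r * v)) * r := by
                  apply mul_le_mul hpd hd1r (Real.sqrt_nonneg _)
                  positivity
              _ = opNorm A * (r * u + r * v) * r := rfl
      _ = opNorm A * (r^2 * u + (r + r^2) * v) := by ring
      _ = opNorm A * (dm * u + (r + dm) * v) := by rw [hr2]
  have hyF : ‖yPart (Fop A z - Fop A z')‖ ≤ opNorm A * ((r + dm) * u + dm * v) := by
    rw [yPart_sub, Fop_yPart, Fop_yPart]
    have hrw : -mulVecE A.transpose xh + p • onesV d2
          - (-mulVecE A.transpose xh' + p' • onesV d2)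
        = -mulVecE A.transpose (xh - xh') + (p - p') • onesV d2 := by
      have hmv : mulVecE A.transpose (xh - xh')
          = mulVecE A.transpose xh - mulVecE A.transpose xh' := by
        ext j
        simp only [mulVecE, PiLp.toLp_apply, PiLp.sub_apply, ← Finset.sum_sub_distrib]
        exact Finset.sum_congr rfl fun i _ => by ring
      rw [hmv, sub_smul]
      abel
    rw [hrw]
    calc ‖-mulVecE A.transpose (xh - xh') + (p - p') • onesV d2‖
        ≤ ‖-mulVecE A.transpose (xh - xh')‖ + ‖(p - p') • onesV d2‖ := norm_add_le _ _
      _ ≤ opNorm A * (r * u) + opNorm A * (r * u + r * v) * r := by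
          apply add_le_add
          · rw [norm_neg]
            calc ‖mulVecE A.transpose (xh - xh')‖ ≤ opNorm A * ‖xh - xh'‖ :=
                  norm_mulVecT_le A _
              _ ≤ opNorm A * (r * u) := mul_le_mul_of_nonneg_left hxL hA
          · rw [norm_smul, Real.norm_eq_abs, norm_onesV]
            calc |p - p'| * Real.sqrt d2 ≤ (opNorm A * (r * u + r * v)) * r := by
                  apply mul_le_mul hpd hd2r (Real.sqrt_nonneg _)
                  positivity
              _ = opNorm A * (r * u + r * v) * r := rfl
      _ = opNorm A * ((r + r^2) * u + r^2 * v) := by ring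
      _ = opNorm A * ((r + dm) * u + dm * v) := by rw [hr2]
  -- combine squares
  have hsq : ‖Fop A z - Fop A z'‖^2 ≤ ((r + 2 * dm) * opNorm A)^2 * ‖z - z'‖^2 := by
    rw [norm_sq_split (Fop A z - Fop A z'), norm_sq_split (z - z')]
    rw [xPart_sub z z', yPart_sub z z']
    have h1 : ‖xPart (Fop A z - Fop A z')‖^2 ≤ (opNorm A * (dm * u + (r + dm) * v))^2 := by
      apply sq_le_sq' _ hxF
      have : 0 ≤ opNorm A * (dm * u + (r + dm) * v) := by positivity
      linarith [norm_nonneg (xPart (Fop A z - Fop A z'))]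
    have h2 : ‖yPart (Fop A z - Fop A z')‖^2 ≤ (opNorm A * ((r + dm) * u + dm * v))^2 := by
      apply sq_le_sq' _ hyF
      have : 0 ≤ opNorm A * ((r + dm) * u + dm * v) := by positivity
      linarith [norm_nonneg (yPart (Fop A z - Fop A z'))]
    have hkey : (opNorm A * (dm * u + (r + dm) * v))^2 + (opNorm A * ((r + dm) * u + dm * v))^2
        ≤ ((r + 2 * dm) * opNorm A)^2 * (u^2 + v^2) := by
      have hnn : 0 ≤ (opNorm A)^2 * (2*r^3 + 2*r^4) * (u - v)^2 := by positivity
      rw [← hr2]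
      have hid : ((r + 2 * r^2) * opNorm A)^2 * (u^2 + v^2)
          = (opNorm A * (r^2 * u + (r + r^2) * v))^2
            + (opNorm A * ((r + r^2) * u + r^2 * v))^2
            + (opNorm A)^2 * (2*r^3 + 2*r^4) * (u - v)^2 := by ring
      linarith [hid.ge]
    calc ‖xPart (Fop A z - Fop A z')‖^2 + ‖yPart (Fop A z - Fop A z')‖^2
        ≤ (opNorm A * (dm * u + (r + dm) * v))^2 + (opNorm A * ((r + dm) * u + dm * v))^2 :=
          add_le_add h1 h2
      _ ≤ ((r + 2 * dm) * opNorm A)^2 * (u^2 + v^2) := hkey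
  have hc0 : 0 ≤ (r + 2 * dm) * opNorm A * ‖z - z'‖ := by positivity
  calc ‖Fop A z - Fop A z'‖ = Real.sqrt (‖Fop A z - Fop A z'‖^2) :=
        (Real.sqrt_sq (norm_nonneg _)).symm
    _ ≤ Real.sqrt (((r + 2 * dm) * opNorm A)^2 * ‖z - z'‖^2) := Real.sqrt_le_sqrt hsq
    _ = (r + 2 * dm) * opNorm A * ‖z - z'‖ := by
        rw [← mul_pow, Real.sqrt_sq (by positivity)]

end FopLip
section GapLemmas

variable {d1 d2 : ℕ}

lemma bddAbove_payoff_img (A : Matrix (Fin d1) (Fin d2) ℝ) {x : Vec d1}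
    (hx : x ∈ simplexSet d1) :
    BddAbove ((fun y' => payoff A x y') '' simplexSet d2) := by
  refine ⟨opNorm A, ?_⟩
  rintro b ⟨y', hy', rfl⟩
  exact le_trans (le_abs_self _) (abs_payoff_le_simplex A hx hy')

lemma bddBelow_payoff_img (A : Matrix (Fin d1) (Fin d2) ℝ) {y : Vec d2}
    (hy : y ∈ simplexSet d2) :
    BddBelow ((fun x' => payoff A x' y) '' simplexSet d1) := by
  refine ⟨-opNorm A, ?_⟩
  rintro b ⟨x', hx', rfl⟩
  exact neg_le_of_abs_le (abs_payoff_le_simplex A hx' hy)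

/-- MVI property of a Nash equilibrium. -/
lemma nash_mvi (A : Matrix (Fin d1) (Fin d2) ℝ) {xs : Vec d1} {ys : Vec d2}
    (hNash : IsNash A xs ys) {xh : Vec d1} {yh : Vec d2}
    (hxh : xh ∈ simplexSet d1) (hyh : yh ∈ simplexSet d2) :
    payoff A xs yh ≤ payoff A xh ys := by
  obtain ⟨hxs, hys, hgap⟩ := hNash
  have heq : sSup ((fun y' => payoff A xs y') '' simplexSet d2)
      = sInf ((fun x' => payoff A x' ys) '' simplexSet d1) := by
    have := sub_eq_zero.mp hgap
    linarith [this]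
  calc payoff A xs yh ≤ sSup ((fun y' => payoff A xs y') '' simplexSet d2) :=
        le_csSup (bddAbove_payoff_img A hxs) ⟨yh, hyh, rfl⟩
    _ = sInf ((fun x' => payoff A x' ys) '' simplexSet d1) := heq
    _ ≤ payoff A xh ys := csInf_le (bddBelow_payoff_img A hys) ⟨xh, hxh, rfl⟩

/-- Bounding the duality gap from pairwise payoff estimates. -/
lemma dualGap_le_of_bound (hd1 : 1 ≤ d1) (hd2 : 1 ≤ d2) (A : Matrix (Fin d1) (Fin d2) ℝ)
    {xh : Vec d1} {yh : Vec d2} (hxh : xh ∈ simplexSet d1) (hyh : yh ∈ simplexSet d2)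
    {K : ℝ} (h : ∀ x' ∈ simplexSet d1, ∀ y' ∈ simplexSet d2,
      payoff A xh y' ≤ payoff A x' yh + K) :
    dualGap A xh yh ≤ K := by
  rw [dualGap, sub_le_iff_le_add]
  apply csSup_le ((simplex_nonempty hd2).image _)
  rintro b ⟨y', hy', rfl⟩
  rw [add_comm, ← sub_le_iff_le_add]
  apply le_csInf ((simplex_nonempty hd1).image _)
  rintro a ⟨x', hx', rfl⟩
  have := h x' hx' y' hy'
  linarith

end GapLemmas
section StepLemmas

variable {E : Type*} [NormedAddCommGroup E] [InnerProductSpace ℝ E]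

lemma norm_identity1 (a b c : E) :
    ‖a - c‖^2 = ‖b - c‖^2 - ‖b - a‖^2 + 2 * ⟪a - b, a - c⟫ := by
  rw [norm_sub_sq_real a c, norm_sub_sq_real b c, norm_sub_sq_real b a,
    inner_sub_left, inner_sub_right, inner_sub_right, real_inner_self_eq_norm_sq]
  ring

lemma norm_identity2 (p q r : E) :
    ‖p - r‖^2 = ‖p - q‖^2 + ‖q - r‖^2 + 2 * ⟪p - q, q - r⟫ := by
  rw [norm_sub_sq_real p r, norm_sub_sq_real p q, norm_sub_sq_real q r,
    inner_sub_left, inner_sub_right, inner_sub_right, real_inner_self_eq_norm_sq]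
  ring

end StepLemmas

section OneStep

variable {d1 d2 : ℕ}

/-- One-step descent inequality for the extragradient step. -/
lemma exrm_onestep (hd1 : 1 ≤ d1) (hd2 : 1 ≤ d2) (A : Matrix (Fin d1) (Fin d2) ℝ)
    {η : ℝ} (hη0 : 0 < η) {p q rr s : Joint d1 d2}
    (hp : p ∈ ZgeSet d1 d2) (hs : s ∈ ZgeSet d1 d2)
    (hq : q = projOn (ZgeSet d1 d2) (p - η • Fop A p))
    (hr : rr = projOn (ZgeSet d1 d2) (p - η • Fop A q))
    (hmvi : 0 ≤ ⟪Fop A q, q - s⟫)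
    {L : ℝ} (hL0 : 0 ≤ L)
    (hL : ‖Fop A q - Fop A p‖ ≤ L * ‖q - p‖)
    (hηL : (η * L)^2 ≤ 3/4) :
    ‖rr - s‖^2 ≤ ‖p - s‖^2 - (1/4) * ‖p - q‖^2 := by
  set Fp := Fop A p with hFp
  set Fq := Fop A q with hFq
  have hrmem : rr ∈ ZgeSet d1 d2 := by rw [hr]; exact (projZge_spec hd1 hd2 _).1
  have hi : ⟪p - η • Fq - rr, s - rr⟫ ≤ 0 := by
    have h2 := (projZge_spec hd1 hd2 (p - η • Fq)).2 s hs
    rwa [← hr] at h2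
  have hii : ⟪p - η • Fp - q, rr - q⟫ ≤ 0 := by
    have h2 := (projZge_spec hd1 hd2 (p - η • Fp)).2 rr hrmem
    rwa [← hq] at h2
  -- rearrange (i)
  have hi' : ⟪p - rr, s - rr⟫ ≤ η * ⟪Fq, s - rr⟫ := by
    have hrw : p - η • Fq - rr = (p - rr) - η • Fq := by abel
    rw [hrw, inner_sub_left, real_inner_smul_left] at hi
    linarith
  -- rearrange (ii)
  have hii' : η * ⟪Fp, q - rr⟫ ≤ ⟪p - q, q - rr⟫ := by
    have hrw : p - η • Fp - q = (p - q) - η • Fp := by abel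
    rw [hrw, inner_sub_left, real_inner_smul_left] at hii
    have h1 : ⟪p - q, rr - q⟫ = -⟪p - q, q - rr⟫ := by
      rw [← neg_sub q rr, inner_neg_right]
    have h2 : ⟪Fp, rr - q⟫ = -⟪Fp, q - rr⟫ := by
      rw [← neg_sub q rr, inner_neg_right]
    rw [h1, h2] at hii
    linarith
  have hmvi' : ⟪Fq, s - q⟫ ≤ 0 := by
    have hh : ⟪Fq, s - q⟫ = -⟪Fq, q - s⟫ := by
      rw [← neg_sub q s, inner_neg_right]
    rw [hh]
    linarith
  -- expanded version of (i)
  have c1e : ⟪p - rr, s - rr⟫ ≤ η * ⟪Fq, s - q⟫ + η * ⟪Fp, q - rr⟫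
      + η * ⟪Fq - Fp, q - rr⟫ := by
    have hsplit : ⟪Fq, s - rr⟫ = ⟪Fq, s - q⟫ + ⟪Fp, q - rr⟫ + ⟪Fq - Fp, q - rr⟫ := by
      have e1 : ⟪Fq, s - rr⟫ = ⟪Fq, s - q⟫ + ⟪Fq, q - rr⟫ := by
        rw [← inner_add_right]
        congr 1
        abel
      have e2 : ⟪Fq - Fp, q - rr⟫ = ⟪Fq, q - rr⟫ - ⟪Fp, q - rr⟫ := inner_sub_left _ _ _
      linarith [e1, e2]
    calc ⟪p - rr, s - rr⟫ ≤ η * ⟪Fq, s - rr⟫ := hi'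
      _ = η * ⟪Fq, s - q⟫ + η * ⟪Fp, q - rr⟫ + η * ⟪Fq - Fp, q - rr⟫ := by
          rw [hsplit]; ring
  have c3 : η * ⟪Fq, s - q⟫ ≤ 0 := mul_nonpos_of_nonneg_of_nonpos hη0.le hmvi'
  -- Cauchy-Schwarz + Lipschitz + AM-GM on the error term
  have hcs : ⟪Fq - Fp, q - rr⟫ ≤ L * ‖p - q‖ * ‖q - rr‖ := by
    calc ⟪Fq - Fp, q - rr⟫ ≤ ‖Fq - Fp‖ * ‖q - rr‖ := real_inner_le_norm _ _
      _ ≤ (L * ‖q - p‖) * ‖q - rr‖ := mul_le_mul_of_nonneg_right hL (norm_nonneg _)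
      _ = L * ‖p - q‖ * ‖q - rr‖ := by rw [norm_sub_rev q p]
  have c2 : η * ⟪Fq - Fp, q - rr⟫ ≤ η * (L * ‖p - q‖ * ‖q - rr‖) :=
    mul_le_mul_of_nonneg_left hcs hη0.le
  have hamgm : 2 * (η * (L * ‖p - q‖ * ‖q - rr‖))
      ≤ (η * L)^2 * ‖p - q‖^2 + ‖q - rr‖^2 := by
    nlinarith [sq_nonneg (η * L * ‖p - q‖ - ‖q - rr‖)]
  -- identities
  have hflip : ⟪rr - p, rr - s⟫ = ⟪p - rr, s - rr⟫ := by
    rw [← neg_sub p rr, ← neg_sub s rr, inner_neg_neg]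
  have hI1 : ‖rr - s‖^2 = ‖p - s‖^2 - ‖p - rr‖^2 + 2 * ⟪p - rr, s - rr⟫ := by
    rw [← hflip]
    exact norm_identity1 rr p s
  have hI2 : ‖p - rr‖^2 = ‖p - q‖^2 + ‖q - rr‖^2 + 2 * ⟪p - q, q - rr⟫ :=
    norm_identity2 p q rr
  have h14 : (1/4 : ℝ) * ‖p - q‖^2 ≤ (1 - (η * L)^2) * ‖p - q‖^2 :=
    mul_le_mul_of_nonneg_right (by linarith) (sq_nonneg _)
  have hexp : (1 - (η * L)^2) * ‖p - q‖^2 = ‖p - q‖^2 - (η * L)^2 * ‖p - q‖^2 := by ring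
  linarith [hI1, hI2, c1e, c3, c2, hamgm, hii', h14, hexp]

end OneStep
set_option maxHeartbeats 1600000 in
/-- Best-iterate O(1/√T) convergence of ExRM⁺ with η = 1/(√2 L_F). -/
theorem exrmp_best_iterate_rate {d1 d2 : ℕ} (hd1 : 1 ≤ d1) (hd2 : 1 ≤ d2)
    (A : Matrix (Fin d1) (Fin d2) ℝ) (hLF : 0 < LF A)
    (η : ℝ) (hη : η = 1 / (Real.sqrt 2 * LF A))
    (z zh : ℕ → Joint d1 d2) (hEx : ExRM A η z zh)
    (xs : Vec d1) (ys : Vec d2) (hNash : IsNash A xs ys)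
    (T : ℕ) (hT : 1 ≤ T) :
    ∃ t : ℕ, 1 ≤ t ∧ t ≤ T ∧
      dualGap A (normPart (xPart (z t))) (normPart (yPart (z t))) ≤
        24 * LF A * ‖z 0 - joinPt xs ys‖ / Real.sqrt T := by
  obtain ⟨hz0, hzh, hziter⟩ := hEx
  set s : Joint d1 d2 := joinPt xs ys with hsdef
  have hxs : xs ∈ simplexSet d1 := hNash.1
  have hys : ys ∈ simplexSet d2 := hNash.2.1
  have hsZ : s ∈ Zset d1 d2 := ⟨by simpa [hsdef] using hxs, by simpa [hsdef] using hys⟩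
  have hsZge : s ∈ ZgeSet d1 d2 := Zset_subset_ZgeSet hsZ
  have hzmem : ∀ t, z t ∈ ZgeSet d1 d2 := by
    intro t
    cases t with
    | zero => exact Zset_subset_ZgeSet hz0
    | succ n => rw [hziter n]; exact (projZge_spec hd1 hd2 _).1
  have hzhmem : ∀ t, zh t ∈ ZgeSet d1 d2 := by
    intro t; rw [hzh t]; exact (projZge_spec hd1 hd2 _).1
  -- constants
  set M := opNorm A with hM
  set dm : ℝ := max (d1:ℝ) (d2:ℝ) with hdm
  have hdm1 : (1:ℝ) ≤ dm := le_max_of_le_left (by exact_mod_cast hd1)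
  have hdm0 : (0:ℝ) < dm := lt_of_lt_of_le one_pos hdm1
  have hM0' : 0 ≤ M := opNorm_nonneg A
  have hLF_eq : LF A = Real.sqrt 6 * M * dm := rfl
  have h6 : Real.sqrt 6 ^ 2 = 6 := Real.sq_sqrt (by norm_num)
  have h2 : Real.sqrt 2 ^ 2 = 2 := Real.sq_sqrt (by norm_num)
  have h6pos : 0 < Real.sqrt 6 := Real.sqrt_pos.mpr (by norm_num)
  have h2pos : 0 < Real.sqrt 2 := Real.sqrt_pos.mpr (by norm_num)
  have h6ge2 : (2:ℝ) ≤ Real.sqrt 6 := by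
    rw [show (2:ℝ) = Real.sqrt 4 by rw [show (4:ℝ) = 2^2 by norm_num, Real.sqrt_sq]; norm_num]
    exact Real.sqrt_le_sqrt (by norm_num)
  have hM0 : 0 < M := by
    rcases lt_or_eq_of_le hM0' with h | h
    · exact h
    · exfalso
      rw [hLF_eq, ← h] at hLF
      simp at hLF
  have hLF0 : 0 < LF A := hLF
  have hη0 : 0 < η := by rw [hη]; positivity
  have hηinv : η * (Real.sqrt 2 * LF A) = 1 := by
    rw [hη]
    field_simp
  have hsd1 : (1:ℝ) ≤ Real.sqrt dm := by
    rw [show (1:ℝ) = Real.sqrt 1 by simp]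
    exact Real.sqrt_le_sqrt hdm1
  have hsd0 : 0 ≤ Real.sqrt dm := Real.sqrt_nonneg _
  have hsdm : Real.sqrt dm ≤ dm := by
    nlinarith [Real.sq_sqrt hdm0.le, mul_nonneg hsd0 (sub_nonneg.mpr hsd1)]
  -- Lipschitz constant
  set L : ℝ := (Real.sqrt dm + 2 * dm) * M with hLdef
  have hL0 : 0 ≤ L := by positivity
  have hLip : ∀ a b : Joint d1 d2, a ∈ ZgeSet d1 d2 → b ∈ ZgeSet d1 d2 →
      ‖Fop A a - Fop A b‖ ≤ L * ‖a - b‖ := by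
    intro a b ha hb
    have := Fop_lipschitz A ha hb
    rw [← hdm, ← hM, ← hLdef] at this
    exact this
  have hηL : (η * L)^2 ≤ 3/4 := by
    have hd2' : (Real.sqrt 2 * (Real.sqrt 6 * M * dm))^2 = 12 * M^2 * dm^2 := by
      rw [mul_pow, mul_pow, mul_pow, h2, h6]; ring
    have hη2 : η^2 = 1 / (12 * M^2 * dm^2) := by
      rw [hη, hLF_eq, div_pow, one_pow, hd2']
    have hL3 : L ≤ 3 * dm * M := by
      rw [hLdef]
      have h3 : Real.sqrt dm + 2 * dm ≤ 3 * dm := by linarith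
      calc (Real.sqrt dm + 2 * dm) * M ≤ (3 * dm) * M :=
            mul_le_mul_of_nonneg_right h3 hM0'
        _ = 3 * dm * M := by ring
    have hLsq : L^2 ≤ 9 * dm^2 * M^2 := by
      calc L^2 ≤ (3 * dm * M)^2 := by
            apply sq_le_sq' _ hL3
            have : 0 ≤ 3 * dm * M := by positivity
            linarith
        _ = 9 * dm^2 * M^2 := by ring
    have : (η * L)^2 = L^2 * (1 / (12 * M^2 * dm^2)) := by
      rw [mul_pow, hη2]; ring
    rw [this]
    calc L^2 * (1 / (12 * M^2 * dm^2)) ≤ (9 * dm^2 * M^2) * (1 / (12 * M^2 * dm^2)) := by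
          apply mul_le_mul_of_nonneg_right hLsq (by positivity)
      _ = 3/4 := by
          field_simp
          ring
  -- MVI at the half iterates
  have hmvi : ∀ t, 0 ≤ ⟪Fop A (zh t), zh t - s⟫ := by
    intro t
    have hid := inner_Fop A (hzhmem t) hxs hys
    rw [← hsdef] at hid
    rw [hid]
    have := nash_mvi A hNash (normPart_mem_simplex (hzhmem t).1)
      (normPart_mem_simplex (hzhmem t).2)
    linarith
  -- one-step descent
  have hstep : ∀ t, ‖z (t+1) - s‖^2 ≤ ‖z t - s‖^2 - (1/4) * ‖z t - zh t‖^2 := by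
    intro t
    exact exrm_onestep hd1 hd2 A hη0 (hzmem t) hsZge (hzh t) (hziter t) (hmvi t) hL0
      (hLip (zh t) (z t) (hzhmem t) (hzmem t)) hηL
  set R : ℝ := ‖z 0 - s‖ with hRdef
  have hR0 : 0 ≤ R := norm_nonneg _
  -- telescoping
  have htel : ∀ N, (∑ t ∈ Finset.range N, ‖z t - zh t‖^2) ≤ 4 * (R^2 - ‖z N - s‖^2) := by
    intro N
    induction N with
    | zero => simp [hRdef]
    | succ n ih =>
        rw [Finset.sum_range_succ]
        have := hstep n
        linarith
  have hmono : ∀ t, ‖z t - s‖^2 ≤ R^2 := by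
    intro t
    have := htel t
    have hnn : (0:ℝ) ≤ ∑ u ∈ Finset.range t, ‖z u - zh u‖^2 :=
      Finset.sum_nonneg fun u _ => sq_nonneg _
    linarith
  have hsumT : (∑ t ∈ Finset.Icc 1 T, ‖z t - zh t‖^2) ≤ 4 * R^2 := by
    have hsub : Finset.Icc 1 T ⊆ Finset.range (T+1) := by
      intro x hx
      rw [Finset.mem_Icc] at hx
      rw [Finset.mem_range]
      omega
    calc (∑ t ∈ Finset.Icc 1 T, ‖z t - zh t‖^2)
        ≤ ∑ t ∈ Finset.range (T+1), ‖z t - zh t‖^2 :=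
          Finset.sum_le_sum_of_subset_of_nonneg hsub (fun t _ _ => sq_nonneg _)
      _ ≤ 4 * (R^2 - ‖z (T+1) - s‖^2) := htel (T+1)
      _ ≤ 4 * R^2 := by linarith [sq_nonneg ‖z (T+1) - s‖]
  have hT0 : (0:ℝ) < T := by exact_mod_cast hT
  -- pick a good iterate
  have hex : ∃ t ∈ Finset.Icc 1 T, ‖z t - zh t‖^2 ≤ 4 * R^2 / T := by
    by_contra hcon
    push_neg at hcon
    have hne : (Finset.Icc 1 T).Nonempty := ⟨1, by simp [hT]⟩
    have hlt : ∑ t ∈ Finset.Icc 1 T, (4 * R^2 / T) < ∑ t ∈ Finset.Icc 1 T, ‖z t - zh t‖^2 :=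
      Finset.sum_lt_sum_of_nonempty hne (fun t ht => hcon t ht)
    rw [Finset.sum_const, Nat.card_Icc] at hlt
    have hcard : ((T + 1 - 1 : ℕ) : ℝ) = (T:ℝ) := by norm_num
    rw [nsmul_eq_mul, hcard] at hlt
    have : (T:ℝ) * (4 * R^2 / T) = 4 * R^2 := by field_simp
    rw [this] at hlt
    linarith
  obtain ⟨t, htmem, hqt⟩ := hex
  rw [Finset.mem_Icc] at htmem
  refine ⟨t, htmem.1, htmem.2, ?_⟩
  -- the gap bound at iterate t
  set w : Joint d1 d2 := z t with hwdef
  set qv : Joint d1 d2 := zh t with hqvdef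
  set D : ℝ := ‖w - qv‖ with hDdef
  have hD0 : 0 ≤ D := norm_nonneg _
  have hsT0 : 0 < Real.sqrt T := Real.sqrt_pos.mpr hT0
  have hsTsq : Real.sqrt T ^ 2 = (T:ℝ) := Real.sq_sqrt hT0.le
  have hD : D ≤ 2 * R / Real.sqrt T := by
    have hrhs0 : 0 ≤ 2 * R / Real.sqrt T := by positivity
    have hsq : D^2 ≤ (2 * R / Real.sqrt T)^2 := by
      rw [div_pow, hsTsq]
      calc D^2 ≤ 4 * R^2 / T := hqt
        _ = (2*R)^2 / T := by ring
    calc D = Real.sqrt (D^2) := (Real.sqrt_sq hD0).symm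
      _ ≤ Real.sqrt ((2 * R / Real.sqrt T)^2) := Real.sqrt_le_sqrt hsq
      _ = 2 * R / Real.sqrt T := Real.sqrt_sq hrhs0
  set Fw : Joint d1 d2 := Fop A w with hFwdef
  set B : ℝ := M * (2 + Real.sqrt d1 + Real.sqrt d2) with hBdef
  have hB0 : 0 ≤ B := by positivity
  have hFwB : ‖Fw‖ ≤ B := norm_Fop_le A (hzmem t)
  have hBLF : B ≤ 2 * LF A := by
    rw [hBdef, hLF_eq]
    have hda : Real.sqrt d1 ≤ Real.sqrt dm := Real.sqrt_le_sqrt (le_max_left _ _)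
    have hdb : Real.sqrt d2 ≤ Real.sqrt dm := Real.sqrt_le_sqrt (le_max_right _ _)
    have h2dm : 2 * dm ≤ Real.sqrt 6 * dm := mul_le_mul_of_nonneg_right h6ge2 hdm0.le
    have key : 2 + Real.sqrt d1 + Real.sqrt d2 ≤ 2 * (Real.sqrt 6 * dm) := by
      linarith
    calc M * (2 + Real.sqrt d1 + Real.sqrt d2) ≤ M * (2 * (Real.sqrt 6 * dm)) :=
          mul_le_mul_of_nonneg_left key hM0'
      _ = 2 * (Real.sqrt 6 * M * dm) := by ring
  -- projection characterizations at the half step from w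
  have hchar := (projZge_spec hd1 hd2 (w - η • Fw)).2
  have hqvproj : qv = projOn (ZgeSet d1 d2) (w - η • Fw) := hzh t
  have hDetaB : D ≤ η * ‖Fw‖ := by
    have hc := hchar w (hzmem t)
    rw [← hqvproj] at hc
    have hrw : w - η • Fw - qv = (w - qv) - η • Fw := by abel
    rw [hrw, inner_sub_left, real_inner_smul_left] at hc
    have hcs : ⟪Fw, w - qv⟫ ≤ ‖Fw‖ * D := by
      calc ⟪Fw, w - qv⟫ ≤ ‖Fw‖ * ‖w - qv‖ := real_inner_le_norm _ _
        _ = ‖Fw‖ * D := rfl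
    have hDsq : D^2 = ⟪w - qv, w - qv⟫ := (real_inner_self_eq_norm_sq _).symm
    rcases eq_or_lt_of_le hD0 with h | h
    · rw [← h]; positivity
    · have hstep1 : η * ⟪Fw, w - qv⟫ ≤ η * (‖Fw‖ * D) :=
        mul_le_mul_of_nonneg_left hcs hη0.le
      have hDD : D^2 ≤ η * (‖Fw‖ * D) := by
        rw [hDsq]
        linarith
      have h' : D * D ≤ (η * ‖Fw‖) * D := by
        have : D * D = D^2 := (sq D).symm
        rw [this]
        calc D^2 ≤ η * (‖Fw‖ * D) := hDD
          _ = (η * ‖Fw‖) * D := by ring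
      exact le_of_mul_le_mul_right h' h
  -- pairwise payoff bound
  have hpair : ∀ x' ∈ simplexSet d1, ∀ y' ∈ simplexSet d2,
      payoff A (normPart (xPart w)) y' ≤ payoff A x' (normPart (yPart w)) + 12 * LF A * D := by
    intro x' hx' y' hy'
    set z' : Joint d1 d2 := joinPt x' y' with hz'def
    have hz'Z : z' ∈ Zset d1 d2 := ⟨by simpa [hz'def] using hx', by simpa [hz'def] using hy'⟩
    have hz'ge : z' ∈ ZgeSet d1 d2 := Zset_subset_ZgeSet hz'Z
    have hid := inner_Fop A (hzmem t) hx' hy'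
    rw [← hz'def, ← hFwdef, ← hwdef] at hid
    have hsplit : ⟪Fw, w - z'⟫ = ⟪Fw, w - qv⟫ + ⟪Fw, qv - z'⟫ := by
      rw [← inner_add_right]
      congr 1
      abel
    have he1 : ⟪Fw, w - qv⟫ ≤ B * D := by
      calc ⟪Fw, w - qv⟫ ≤ ‖Fw‖ * ‖w - qv‖ := real_inner_le_norm _ _
        _ ≤ B * D := by
            apply mul_le_mul hFwB le_rfl (norm_nonneg _) hB0
    have hqz' : ‖qv - z'‖ ≤ D + R + 2 * Real.sqrt 2 := by
      have hwS : ‖w - s‖ ≤ R := by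
        have hsq' := hmono t
        rw [← hwdef] at hsq'
        calc ‖w - s‖ = Real.sqrt (‖w - s‖^2) := (Real.sqrt_sq (norm_nonneg _)).symm
          _ ≤ Real.sqrt (R^2) := Real.sqrt_le_sqrt hsq'
          _ = R := Real.sqrt_sq hR0
      have hsz' : ‖s - z'‖ ≤ 2 * Real.sqrt 2 := dist_Zset_le hsZ hz'Z
      calc ‖qv - z'‖ = ‖(qv - w) + ((w - s) + (s - z'))‖ := by congr 1; abel
        _ ≤ ‖qv - w‖ + ‖(w - s) + (s - z')‖ := norm_add_le _ _
        _ ≤ ‖qv - w‖ + (‖w - s‖ + ‖s - z'‖) := by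
            apply add_le_add_right (norm_add_le _ _)
        _ ≤ D + (R + 2 * Real.sqrt 2) := by
            have : ‖qv - w‖ = D := by rw [norm_sub_rev qv w]
            rw [this]
            exact add_le_add_right (add_le_add hwS hsz') D
        _ = D + R + 2 * Real.sqrt 2 := by ring
    have he2 : η * ⟪Fw, qv - z'⟫ ≤ D * ‖qv - z'‖ := by
      have hc := hchar z' hz'ge
      rw [← hqvproj] at hc
      have hrw : w - η • Fw - qv = (w - qv) - η • Fw := by abel
      rw [hrw, inner_sub_left, real_inner_smul_left] at hc
      have hflip1 : ⟪w - qv, z' - qv⟫ = -⟪w - qv, qv - z'⟫ := by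
        rw [← neg_sub qv z', inner_neg_right]
      have hflip2 : ⟪Fw, z' - qv⟫ = -⟪Fw, qv - z'⟫ := by
        rw [← neg_sub qv z', inner_neg_right]
      rw [hflip1, hflip2] at hc
      have hcs : ⟪w - qv, qv - z'⟫ ≤ D * ‖qv - z'‖ := by
        calc ⟪w - qv, qv - z'⟫ ≤ ‖w - qv‖ * ‖qv - z'‖ := real_inner_le_norm _ _
          _ = D * ‖qv - z'‖ := rfl
      linarith only [hc, hcs]
    -- combine
    have hbound : ⟪Fw, w - z'⟫ ≤ 12 * LF A * D := by
      have hqz0 : 0 ≤ ‖qv - z'‖ := norm_nonneg _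
      have he2' : ⟪Fw, qv - z'⟫ ≤ Real.sqrt 2 * LF A * (D * ‖qv - z'‖) := by
        have hpos : (0:ℝ) ≤ Real.sqrt 2 * LF A := by positivity
        have h1 := mul_le_mul_of_nonneg_left he2 hpos
        have h2' : Real.sqrt 2 * LF A * (η * ⟪Fw, qv - z'⟫) = ⟪Fw, qv - z'⟫ := by
          have he : Real.sqrt 2 * LF A * (η * ⟪Fw, qv - z'⟫)
              = (η * (Real.sqrt 2 * LF A)) * ⟪Fw, qv - z'⟫ := by ring
          rw [he, hηinv, one_mul]
        rw [h2'] at h1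
        exact h1
      -- numeric assembly
      have hDRs : D * ‖qv - z'‖ ≤ D * (D + R + 2 * Real.sqrt 2) :=
        mul_le_mul_of_nonneg_left hqz' hD0
      have hDetaB' : Real.sqrt 2 * LF A * D ≤ B := by
        have := mul_le_mul_of_nonneg_left hDetaB (by positivity : (0:ℝ) ≤ Real.sqrt 2 * LF A)
        calc Real.sqrt 2 * LF A * D ≤ Real.sqrt 2 * LF A * (η * ‖Fw‖) := this
          _ = (η * (Real.sqrt 2 * LF A)) * ‖Fw‖ := by ring
          _ = ‖Fw‖ := by rw [hηinv]; ring
          _ ≤ B := hFwB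
      have hRs : R ≤ 2 * Real.sqrt 2 := by
        rw [hRdef]
        exact dist_Zset_le hz0 hsZ
      have hfin : ⟪Fw, qv - z'⟫ ≤ B * D + 8 * LF A * D := by
        calc ⟪Fw, qv - z'⟫ ≤ Real.sqrt 2 * LF A * (D * (D + R + 2 * Real.sqrt 2)) :=
              le_trans he2' (mul_le_mul_of_nonneg_left hDRs (by positivity))
          _ = (Real.sqrt 2 * LF A * D) * D + Real.sqrt 2 * LF A * D * R
              + 2 * (Real.sqrt 2 * Real.sqrt 2) * LF A * D := by ring
          _ ≤ B * D + Real.sqrt 2 * LF A * D * (2 * Real.sqrt 2)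
              + 2 * (Real.sqrt 2 * Real.sqrt 2) * LF A * D := by
              have hterm1 : (Real.sqrt 2 * LF A * D) * D ≤ B * D :=
                mul_le_mul_of_nonneg_right hDetaB' hD0
              have hterm2 : Real.sqrt 2 * LF A * D * R ≤ Real.sqrt 2 * LF A * D * (2 * Real.sqrt 2) :=
                mul_le_mul_of_nonneg_left hRs (by positivity)
              linarith only [hterm1, hterm2]
          _ = B * D + 4 * (Real.sqrt 2 * Real.sqrt 2) * LF A * D := by ring
          _ = B * D + 8 * LF A * D := by
              have h22 : Real.sqrt 2 * Real.sqrt 2 = 2 := Real.mul_self_sqrt (by norm_num)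
              rw [h22]; ring
      rw [hsplit]
      have hBD : B * D ≤ 2 * LF A * D := mul_le_mul_of_nonneg_right hBLF hD0
      linarith only [he1, hfin, hBD]
    rw [hid] at hbound
    linarith only [hbound]
  -- conclude via the duality gap bound
  have hgap := dualGap_le_of_bound hd1 hd2 A (normPart_mem_simplex (hzmem t).1)
    (normPart_mem_simplex (hzmem t).2) hpair
  calc dualGap A (normPart (xPart (z t))) (normPart (yPart (z t))) ≤ 12 * LF A * D := hgap
    _ ≤ 12 * LF A * (2 * R / Real.sqrt T) := by
        apply mul_le_mul_of_nonneg_left hD (by positivity)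
    _ = 24 * LF A * R / Real.sqrt T := by ring
end
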